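/- arXiv:2302.01658 — 2 statements merged into one kernel-verified Lean document; each statement's English description precedes it below -/
import Mathlib

section
/- For all real c > 0 and X ∈ ℝ, the improper integral converges and ∫_X^∞ ( 1 − 2 e^{−x/2} F(e^{−x/2}) ) e^{−x/2 − c e^{−x}} dx = (2/(c+1)) · e^{−c e^{−X}} · F(e^{−X/2}) + √π · (√c/(c+1)) · erf(√c · e^{−X/2}). -/
/-!
Put `u = e^{-x/2}`, so that the integrand is `(1 - 2uF(u)) · u e^{-cu²}` and `du = -u/2 dx`.
Since `F' = 1 - 2xF` and `erf' = (2/√π) e^{-x²}`, the function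
`G(u) = 2/(c+1) · e^{-cu²} F(u) + √π √c/(c+1) · erf(√c u)` satisfies `G'(u) = 2 e^{-cu²}(1 - 2uF(u))`,
so `x ↦ G(e^{-x/2})` is an antiderivative of minus the integrand. It tends to `G(0) = 0` as `x → ∞`,
and the integrand is `O(e^{-x/2})` because `|F(u)| ≤ |u|`.
-/

open MeasureTheory

/-- The Dawson function `F(x) = e^{−x²} ∫₀ˣ e^{t²} dt`. -/
noncomputable def dawson (x : ℝ) : ℝ := Real.exp (-x ^ 2) * ∫ t in (0 : ℝ)..x, Real.exp (t ^ 2)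

/-- The error function `erf(x) = (2/√π) ∫₀ˣ e^{−t²} dt`. -/
noncomputable def erf (x : ℝ) : ℝ := 2 / Real.sqrt Real.pi * ∫ t in (0 : ℝ)..x, Real.exp (-t ^ 2)

open Filter Topology Real

theorem hasDerivAt_dawson (x : ℝ) : HasDerivAt dawson (1 - 2 * x * dawson x) x := by
  have hI : HasDerivAt (fun u : ℝ => ∫ t in (0 : ℝ)..u, exp (t ^ 2)) (exp (x ^ 2)) x :=
    ((continuous_exp.comp (continuous_pow 2)).integral_hasStrictDerivAt 0 x).hasDerivAt
  have hE : HasDerivAt (fun y : ℝ => exp (-y ^ 2)) (exp (-x ^ 2) * -(2 * x)) x := by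
    simpa using ((hasDerivAt_pow 2 x).fun_neg).exp
  refine (hE.mul hI).congr_deriv ?_
  have : exp (-x ^ 2) * exp (x ^ 2) = 1 := by rw [← exp_add]; simp
  rw [dawson, this]
  ring

theorem hasDerivAt_erf (x : ℝ) : HasDerivAt erf (2 / √π * exp (-x ^ 2)) x :=
  ((continuous_exp.comp (continuous_pow 2).neg).integral_hasStrictDerivAt 0 x).hasDerivAt.const_mul _

@[fun_prop]
theorem continuous_dawson : Continuous dawson :=
  continuous_iff_continuousAt.2 fun x => (hasDerivAt_dawson x).continuousAt

theorem dawson_zero : dawson 0 = 0 := by simp [dawson]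

theorem erf_zero : erf 0 = 0 := by simp [erf]

theorem abs_dawson_le (u : ℝ) : |dawson u| ≤ |u| := by
  have h : ‖∫ t in (0 : ℝ)..u, exp (t ^ 2)‖ ≤ exp (u ^ 2) * |u - 0| := by
    refine intervalIntegral.norm_integral_le_of_norm_le_const fun t ht => ?_
    rw [norm_eq_abs, abs_exp, exp_le_exp]
    rcases Set.mem_uIoc.1 ht with ⟨h1, h2⟩ | ⟨h1, h2⟩ <;> nlinarith
  rw [norm_eq_abs, sub_zero] at h
  calc |dawson u| = exp (-u ^ 2) * |∫ t in (0 : ℝ)..u, exp (t ^ 2)| := by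
        rw [dawson, abs_mul, abs_exp]
    _ ≤ exp (-u ^ 2) * (exp (u ^ 2) * |u|) := by gcongr
    _ = |u| := by rw [← mul_assoc, ← exp_add]; simp

theorem abs_one_sub_two_mul_dawson_le (u : ℝ) : |1 - 2 * u * dawson u| ≤ 1 + 2 * u ^ 2 := by
  calc |1 - 2 * u * dawson u| ≤ |1| + |2 * u * dawson u| := abs_sub _ _
    _ = 1 + 2 * (|u| * |dawson u|) := by simp [abs_mul, mul_assoc]
    _ ≤ 1 + 2 * (|u| * |u|) := by gcongr 1 + 2 * (|u| * ?_); exact abs_dawson_le u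
    _ = 1 + 2 * u ^ 2 := by rw [← abs_mul, abs_mul_self, sq]

/-- The antiderivative `G` of the header, as a function of `u = e^{-x/2}`. -/
noncomputable def lowerTailPrimitive (c u : ℝ) : ℝ :=
  2 / (c + 1) * exp (-(c * u ^ 2)) * dawson u + √π * (√c / (c + 1)) * erf (√c * u)

theorem hasDerivAt_lowerTailPrimitive {c : ℝ} (hc : 0 ≤ c) (u : ℝ) :
    HasDerivAt (lowerTailPrimitive c) (2 * exp (-(c * u ^ 2)) * (1 - 2 * u * dawson u)) u := by
  have hA : HasDerivAt (fun v : ℝ => exp (-(c * v ^ 2))) (exp (-(c * u ^ 2)) * -(c * (2 * u))) u :=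
    by simpa using ((hasDerivAt_pow 2 u).const_mul c).neg.exp
  have hE : HasDerivAt (fun v : ℝ => erf (√c * v)) (2 / √π * exp (-(√c * u) ^ 2) * √c) u := by
    simpa [Function.comp_def] using
      (hasDerivAt_erf (√c * u)).comp u ((hasDerivAt_id u).const_mul √c)
  refine (((hA.const_mul (2 / (c + 1))).mul (hasDerivAt_dawson u)).add
    (hE.const_mul (√π * (√c / (c + 1))))).congr_deriv ?_
  have hsq : (√c * u) ^ 2 = c * u ^ 2 := by rw [mul_pow, sq_sqrt hc]
  rw [hsq]
  field_simp
  linear_combination sq_sqrt hc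

theorem lowerTailPrimitive_zero (c : ℝ) : lowerTailPrimitive c 0 = 0 := by
  simp [lowerTailPrimitive, dawson_zero, erf_zero]

theorem exp_neg_div_two_sq (x : ℝ) : exp (-x / 2) ^ 2 = exp (-x) := by
  rw [← exp_nat_mul]; ring_nf

theorem hasDerivAt_lowerTailPrimitive_exp {c : ℝ} (hc : 0 ≤ c) (x : ℝ) :
    HasDerivAt (fun y => lowerTailPrimitive c (exp (-y / 2)))
      (-((1 - 2 * exp (-x / 2) * dawson (exp (-x / 2))) * exp (-x / 2 - c * exp (-x)))) x := by
  have hu : HasDerivAt (fun y : ℝ => exp (-y / 2)) (exp (-x / 2) * (-1 / 2)) x :=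
    ((hasDerivAt_id x).neg.div_const 2).exp
  refine ((hasDerivAt_lowerTailPrimitive hc _).comp x hu).congr_deriv ?_
  have hsplit : exp (-x / 2 - c * exp (-x)) = exp (-x / 2) * exp (-(c * exp (-x))) := by
    rw [← exp_add]; ring_nf
  rw [exp_neg_div_two_sq, hsplit]
  ring

theorem integrableOn_lowerTail_integrand {c : ℝ} (hc : 0 ≤ c) (X : ℝ) :
    IntegrableOn
      (fun x : ℝ => (1 - 2 * exp (-x / 2) * dawson (exp (-x / 2))) *
        exp (-x / 2 - c * exp (-x))) (Set.Ioi X) := by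
  refine Integrable.mono' ((exp_neg_integrableOn_Ioi X (by norm_num : (0 : ℝ) < 1 / 2)).const_mul
    (1 + 2 * exp (-X))) (by fun_prop : Continuous _).aestronglyMeasurable ?_
  filter_upwards [ae_restrict_mem measurableSet_Ioi] with x (hx : X < x)
  rw [norm_mul, norm_eq_abs, norm_of_nonneg (exp_pos _).le]
  gcongr
  · calc _ ≤ 1 + 2 * exp (-x / 2) ^ 2 := abs_one_sub_two_mul_dawson_le _
      _ ≤ 1 + 2 * exp (-X) := by rw [exp_neg_div_two_sq]; gcongr
  · nlinarith [exp_pos (-x)]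

theorem tendsto_lowerTailPrimitive_exp_atTop {c : ℝ} (hc : 0 ≤ c) :
    Tendsto (fun x => lowerTailPrimitive c (exp (-x / 2))) atTop (𝓝 0) := by
  have hu : Tendsto (fun x : ℝ => exp (-x / 2)) atTop (𝓝 0) :=
    tendsto_exp_atBot.comp ((tendsto_neg_atTop_atBot).atBot_div_const two_pos)
  have hG : Continuous (lowerTailPrimitive c) :=
    continuous_iff_continuousAt.2 fun u => (hasDerivAt_lowerTailPrimitive hc u).continuousAt
  simpa [Function.comp_def, lowerTailPrimitive_zero] using (hG.tendsto 0).comp hu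

/-- lower-tail integral identity for all `c > 0`, `X ∈ ℝ`. -/
theorem lower_tail_integral (c X : ℝ) (hc : 0 < c) :
    IntegrableOn
      (fun x : ℝ => (1 - 2 * Real.exp (-x / 2) * dawson (Real.exp (-x / 2))) *
        Real.exp (-x / 2 - c * Real.exp (-x))) (Set.Ioi X) ∧
      ∫ x in Set.Ioi X, (1 - 2 * Real.exp (-x / 2) * dawson (Real.exp (-x / 2))) *
          Real.exp (-x / 2 - c * Real.exp (-x))
        = 2 / (c + 1) * Real.exp (-(c * Real.exp (-X))) * dawson (Real.exp (-X / 2))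
            + Real.sqrt Real.pi * (Real.sqrt c / (c + 1)) * erf (Real.sqrt c * Real.exp (-X / 2)) := by
  have hint := integrableOn_lowerTail_integrand hc.le X
  refine ⟨hint, ?_⟩
  have hFTC := integral_Ioi_of_hasDerivAt_of_tendsto
    (hasDerivAt_lowerTailPrimitive_exp hc.le X).continuousAt.continuousWithinAt
    (fun x _ => hasDerivAt_lowerTailPrimitive_exp hc.le x) hint.neg
    (tendsto_lowerTailPrimitive_exp_atTop hc.le)
  rw [integral_neg, zero_sub, neg_inj] at hFTC
  rw [hFTC, lowerTailPrimitive, exp_neg_div_two_sq]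
end

section
/- For all a > 0, K ≥ 1, every s ∈ [1, K], and every y ∈ ℝ, one has f_a(s, y) ≤ (4/√π) · e^{−y/2} · a^{1/4} · max{ 1, √K/√a }. -/
/-- `f_a(s, y) = (2 a^{1/4}/√(sπ)) e^{−(s/√a) e^{−y}} F(e^{−y/2}) + erf((√s/a^{1/4}) e^{−y/2})`. -/
noncomputable def fA (a s y : ℝ) : ℝ :=
  2 * a ^ ((1 : ℝ) / 4) / Real.sqrt (s * Real.pi) *
      Real.exp (-(s / Real.sqrt a) * Real.exp (-y)) * dawson (Real.exp (-y / 2))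
    + erf (Real.sqrt s / a ^ ((1 : ℝ) / 4) * Real.exp (-y / 2))

lemma dawson_nonneg {x : ℝ} (hx : 0 ≤ x) : 0 ≤ dawson x := by
  unfold dawson
  apply mul_nonneg (Real.exp_nonneg _)
  exact intervalIntegral.integral_nonneg hx fun t _ => (Real.exp_pos _).le

lemma dawson_le {x : ℝ} (hx : 0 ≤ x) : dawson x ≤ x := by
  unfold dawson
  have h : (∫ t in (0 : ℝ)..x, Real.exp (t ^ 2)) ≤ x * Real.exp (x ^ 2) := by
    calc (∫ t in (0 : ℝ)..x, Real.exp (t ^ 2))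
        ≤ ∫ _t in (0 : ℝ)..x, Real.exp (x ^ 2) := by
          apply intervalIntegral.integral_mono_on hx
          · exact (Real.continuous_exp.comp (continuous_pow 2)).intervalIntegrable _ _
          · exact intervalIntegrable_const
          · intro t ht
            exact Real.exp_le_exp.2 (by nlinarith [ht.1, ht.2])
      _ = x * Real.exp (x ^ 2) := by simp
  calc Real.exp (-x ^ 2) * ∫ t in (0 : ℝ)..x, Real.exp (t ^ 2)
      ≤ Real.exp (-x ^ 2) * (x * Real.exp (x ^ 2)) :=
        mul_le_mul_of_nonneg_left h (Real.exp_nonneg _)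
    _ = x := by
        rw [mul_comm x, ← mul_assoc, ← Real.exp_add]
        simp

lemma erf_le {x : ℝ} (hx : 0 ≤ x) : erf x ≤ 2 / Real.sqrt Real.pi * x := by
  unfold erf
  have h : (∫ t in (0 : ℝ)..x, Real.exp (-t ^ 2)) ≤ x := by
    calc (∫ t in (0 : ℝ)..x, Real.exp (-t ^ 2))
        ≤ ∫ _t in (0 : ℝ)..x, (1 : ℝ) := by
          apply intervalIntegral.integral_mono_on hx
          · exact (Real.continuous_exp.comp (by continuity)).intervalIntegrable _ _
          · exact intervalIntegrable_const
          · intro t _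
            exact Real.exp_le_one_iff.2 (neg_nonpos.2 (by positivity))
      _ = x := by simp
  exact mul_le_mul_of_nonneg_left h (by positivity)

/-- for `a > 0`, `K ≥ 1`, `s ∈ [1,K]` and `y ∈ ℝ`,
`f_a(s,y) ≤ (4/√π) e^{−y/2} a^{1/4} max{1, √K/√a}`. -/
theorem fA_le (a K : ℝ) (ha : 0 < a) (hK : 1 ≤ K) (s : ℝ) (hs1 : 1 ≤ s) (hsK : s ≤ K)
    (y : ℝ) :
    fA a s y ≤ 4 / Real.sqrt Real.pi * Real.exp (-y / 2) * a ^ ((1 : ℝ) / 4) *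
      max 1 (Real.sqrt K / Real.sqrt a) := by
  have hπ : 0 < Real.sqrt Real.pi := Real.sqrt_pos.2 Real.pi_pos
  have ha4 : (0 : ℝ) < a ^ ((1 : ℝ) / 4) := Real.rpow_pos_of_pos ha _
  have hE : (0 : ℝ) < Real.exp (-y / 2) := Real.exp_pos _
  have hmax : (1 : ℝ) ≤ max 1 (Real.sqrt K / Real.sqrt a) := le_max_left _ _
  -- bound first term
  have hsqrt_s : Real.sqrt Real.pi ≤ Real.sqrt (s * Real.pi) := by
    apply Real.sqrt_le_sqrt
    nlinarith [Real.pi_pos]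
  have hA : 2 * a ^ ((1 : ℝ) / 4) / Real.sqrt (s * Real.pi) ≤
      2 * a ^ ((1 : ℝ) / 4) / Real.sqrt Real.pi :=
    div_le_div_of_nonneg_left (by positivity) hπ hsqrt_s
  have hexp1 : Real.exp (-(s / Real.sqrt a) * Real.exp (-y)) ≤ 1 := by
    apply Real.exp_le_one_iff.2
    have : 0 ≤ s / Real.sqrt a := by positivity
    nlinarith [Real.exp_pos (-y)]
  have hD : dawson (Real.exp (-y / 2)) ≤ Real.exp (-y / 2) := dawson_le hE.le
  have hDnn : 0 ≤ dawson (Real.exp (-y / 2)) := dawson_nonneg hE.le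
  have hterm1 : 2 * a ^ ((1 : ℝ) / 4) / Real.sqrt (s * Real.pi) *
      Real.exp (-(s / Real.sqrt a) * Real.exp (-y)) * dawson (Real.exp (-y / 2)) ≤
      2 / Real.sqrt Real.pi * Real.exp (-y / 2) * a ^ ((1 : ℝ) / 4) := by
    have h1 : 2 * a ^ ((1 : ℝ) / 4) / Real.sqrt (s * Real.pi) *
        Real.exp (-(s / Real.sqrt a) * Real.exp (-y)) ≤
        2 * a ^ ((1 : ℝ) / 4) / Real.sqrt Real.pi := by
      calc 2 * a ^ ((1 : ℝ) / 4) / Real.sqrt (s * Real.pi) *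
            Real.exp (-(s / Real.sqrt a) * Real.exp (-y))
          ≤ 2 * a ^ ((1 : ℝ) / 4) / Real.sqrt (s * Real.pi) * 1 :=
            mul_le_mul_of_nonneg_left hexp1 (by positivity)
        _ = 2 * a ^ ((1 : ℝ) / 4) / Real.sqrt (s * Real.pi) := mul_one _
        _ ≤ 2 * a ^ ((1 : ℝ) / 4) / Real.sqrt Real.pi := hA
    calc 2 * a ^ ((1 : ℝ) / 4) / Real.sqrt (s * Real.pi) *
          Real.exp (-(s / Real.sqrt a) * Real.exp (-y)) * dawson (Real.exp (-y / 2))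
        ≤ 2 * a ^ ((1 : ℝ) / 4) / Real.sqrt Real.pi * Real.exp (-y / 2) :=
          mul_le_mul h1 hD hDnn (by positivity)
      _ = 2 / Real.sqrt Real.pi * Real.exp (-y / 2) * a ^ ((1 : ℝ) / 4) := by ring
  -- bound second term
  have hx0 : (0 : ℝ) ≤ Real.sqrt s / a ^ ((1 : ℝ) / 4) * Real.exp (-y / 2) := by positivity
  have hsK' : Real.sqrt s ≤ Real.sqrt K := Real.sqrt_le_sqrt hsK
  have hid : Real.sqrt K / a ^ ((1 : ℝ) / 4) =
      a ^ ((1 : ℝ) / 4) * (Real.sqrt K / Real.sqrt a) := by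
    have hsa : Real.sqrt a = a ^ ((1 : ℝ) / 4) * a ^ ((1 : ℝ) / 4) := by
      rw [← Real.rpow_add ha, Real.sqrt_eq_rpow]
      norm_num
    rw [hsa]
    field_simp
  have hterm2 : erf (Real.sqrt s / a ^ ((1 : ℝ) / 4) * Real.exp (-y / 2)) ≤
      2 / Real.sqrt Real.pi * Real.exp (-y / 2) * a ^ ((1 : ℝ) / 4) *
        max 1 (Real.sqrt K / Real.sqrt a) := by
    calc erf (Real.sqrt s / a ^ ((1 : ℝ) / 4) * Real.exp (-y / 2))
        ≤ 2 / Real.sqrt Real.pi * (Real.sqrt s / a ^ ((1 : ℝ) / 4) * Real.exp (-y / 2)) :=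
          erf_le hx0
      _ ≤ 2 / Real.sqrt Real.pi * (Real.sqrt K / a ^ ((1 : ℝ) / 4) * Real.exp (-y / 2)) := by
          apply mul_le_mul_of_nonneg_left _ (by positivity)
          apply mul_le_mul_of_nonneg_right _ hE.le
          gcongr
      _ = 2 / Real.sqrt Real.pi * Real.exp (-y / 2) * a ^ ((1 : ℝ) / 4) *
            (Real.sqrt K / Real.sqrt a) := by rw [hid]; ring
      _ ≤ 2 / Real.sqrt Real.pi * Real.exp (-y / 2) * a ^ ((1 : ℝ) / 4) *
            max 1 (Real.sqrt K / Real.sqrt a) :=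
          mul_le_mul_of_nonneg_left (le_max_right _ _) (by positivity)
  have hterm1' : 2 * a ^ ((1 : ℝ) / 4) / Real.sqrt (s * Real.pi) *
      Real.exp (-(s / Real.sqrt a) * Real.exp (-y)) * dawson (Real.exp (-y / 2)) ≤
      2 / Real.sqrt Real.pi * Real.exp (-y / 2) * a ^ ((1 : ℝ) / 4) *
        max 1 (Real.sqrt K / Real.sqrt a) := by
    calc 2 * a ^ ((1 : ℝ) / 4) / Real.sqrt (s * Real.pi) *
          Real.exp (-(s / Real.sqrt a) * Real.exp (-y)) * dawson (Real.exp (-y / 2))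
        ≤ 2 / Real.sqrt Real.pi * Real.exp (-y / 2) * a ^ ((1 : ℝ) / 4) := hterm1
      _ = 2 / Real.sqrt Real.pi * Real.exp (-y / 2) * a ^ ((1 : ℝ) / 4) * 1 := (mul_one _).symm
      _ ≤ 2 / Real.sqrt Real.pi * Real.exp (-y / 2) * a ^ ((1 : ℝ) / 4) *
            max 1 (Real.sqrt K / Real.sqrt a) :=
          mul_le_mul_of_nonneg_left hmax (by positivity)
  unfold fA
  refine (add_le_add hterm1' hterm2).trans (le_of_eq ?_)
  ring
end
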